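/- Factorization of H₆ when s = 1: if e ∈ ℂ⁹ satisfies e₁ + ⋯ + e₉ = 3 (equivalently s = 1), then for every u ∈ ℂ the identity H₆(e,u) = ∂³ ∘ (x³·B₀(θ) + x²·B₁(θ−1) + x·B₂(θ−2) + T₃(θ−3)) holds in End_ℂ(ℂ[x]). -/
import Mathlib


open Polynomial

noncomputable section

abbrev EndP := Module.End ℂ (Polynomial ℂ)

/-- The formal derivative `∂` as a linear endomorphism of `ℂ[x]`. -/
def D : EndP := Polynomial.derivative

/-- Multiplication by the polynomial `p` as a linear endomorphism of `ℂ[x]`. -/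
def M (p : Polynomial ℂ) : EndP := LinearMap.mulLeft ℂ p

/-- The Euler operator `θ = x·∂`. -/
def θop : EndP := M X * D

/-- `s = (6 − e₁ − ⋯ − e₉)/3`. -/
def sC (e1 e2 e3 e4 e5 e6 e7 e8 e9 : ℂ) : ℂ :=
  (6 - e1 - e2 - e3 - e4 - e5 - e6 - e7 - e8 - e9) / 3

def T12C (e1 e2 e3 _e4 _e5 _e6 e7 e8 e9 : ℂ) : ℂ :=
  (e1 + e2 + e3) - 2 * (e7 + e8 + e9) - 9

def T11C (e1 e2 e3 e4 e5 e6 e7 e8 e9 : ℂ) : ℂ :=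
  let s11 := e1 + e2 + e3;
  let s12 := e4 + e5 + e6;
  let s13 := e7 + e8 + e9;
  let s21 := e1*e2 + e1*e3 + e2*e3;
  let s22 := e4*e5 + e4*e6 + e5*e6;
  let s23 := e7*e8 + e7*e9 + e8*e9;
  -8 + (s11^2 + 2*s11*s13 - s12^2 + s13^2)/3 + s11 - 5*s13 - s21 + s22 - 2*s23

def T22C (e1 e2 e3 _e4 _e5 _e6 e7 e8 e9 : ℂ) : ℂ :=
  -2 * (e1 + e2 + e3) + (e7 + e8 + e9) + 18

def T21C (e1 e2 e3 e4 e5 e6 e7 e8 e9 : ℂ) : ℂ :=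
  let s11 := e1 + e2 + e3;
  let s12 := e4 + e5 + e6;
  let s13 := e7 + e8 + e9;
  let s21 := e1*e2 + e1*e3 + e2*e3;
  let s22 := e4*e5 + e4*e6 + e5*e6;
  let s23 := e7*e8 + e7*e9 + e8*e9;
  35 + (-s11^2 - 2*s11*s13 + s12^2 - s13^2)/3 - 7*s11 + 5*s13 + 2*s21 - s22 + s23

def T20C (e1 e2 e3 e4 e5 e6 e7 e8 e9 u : ℂ) : ℂ :=
  let s11 := e1 + e2 + e3;
  let s12 := e4 + e5 + e6;
  let s13 := e7 + e8 + e9;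
  let s21 := e1*e2 + e1*e3 + e2*e3;
  let s22 := e4*e5 + e4*e6 + e5*e6;
  let s31 := e1*e2*e3;
  let s32 := e4*e5*e6;
  let s33 := e7*e8*e9;
  -u + 19 + (s11^2*s13 - s11*s12^2 + s11*s13^2 - s12^2*s13)/9
    + (s13^3 + s11^3 - 2*s12^3)/27
    + (-2*s11^2 - 4*s11*s13 + s11*s22 + 2*s12^2 + s22*s12 - 2*s13^2 + s22*s13)/3
    - 5*s11 + 4*s13 + 3*s21 - 2*s22 - s31 - s32 - s33

/-- `B₀(t) = (t+e₇)(t+e₈)(t+e₉)`. -/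
def B0op (e7 e8 e9 : ℂ) (t : EndP) : EndP :=
  (t + e7 • 1) * (t + e8 • 1) * (t + e9 • 1)

/-- `B₁(t) = −3t³ + T₁₂t² + T₁₁t + u`. -/
def B1op (e1 e2 e3 e4 e5 e6 e7 e8 e9 u : ℂ) (t : EndP) : EndP :=
  (-3 : ℂ) • t ^ 3 + (T12C e1 e2 e3 e4 e5 e6 e7 e8 e9) • t ^ 2
    + (T11C e1 e2 e3 e4 e5 e6 e7 e8 e9) • t + u • 1

/-- `B₂(t) = 3t³ + T₂₂t² + T₂₁t + T₂₀`. -/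
def B2op (e1 e2 e3 e4 e5 e6 e7 e8 e9 u : ℂ) (t : EndP) : EndP :=
  (3 : ℂ) • t ^ 3 + (T22C e1 e2 e3 e4 e5 e6 e7 e8 e9) • t ^ 2
    + (T21C e1 e2 e3 e4 e5 e6 e7 e8 e9) • t + (T20C e1 e2 e3 e4 e5 e6 e7 e8 e9 u) • 1

/-- `T₃(t) = −(t+3−e₁)(t+3−e₂)(t+3−e₃)`. -/
def T3op (e1 e2 e3 : ℂ) (t : EndP) : EndP :=
  -((t + (3 - e1) • 1) * (t + (3 - e2) • 1) * (t + (3 - e3) • 1))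

/-- The operator `H₆(e,u)`. -/
def H6op (e1 e2 e3 e4 e5 e6 e7 e8 e9 u : ℂ) : EndP :=
  let s := sC e1 e2 e3 e4 e5 e6 e7 e8 e9;
  (θop + (s + 2) • 1) * (θop + (s + 1) • 1) * (θop + s • 1) * B0op e7 e8 e9 θop
    + (θop + (s + 2) • 1) * (θop + (s + 1) • 1) * B1op e1 e2 e3 e4 e5 e6 e7 e8 e9 u θop * D
    + (θop + (s + 2) • 1) * B2op e1 e2 e3 e4 e5 e6 e7 e8 e9 u θop * D ^ 2
    + T3op e1 e2 e3 θop * D ^ 3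


-- Auxiliary commutation lemmas ------------------------------------------------

lemma hXD : D * M X = θop + 1 := by
  apply LinearMap.ext
  intro p
  simp only [D, M, θop, Module.End.mul_apply, LinearMap.mulLeft_apply, LinearMap.add_apply,
    Module.End.one_apply, derivative_mul, derivative_X, one_mul]
  ring

lemma hDθ : D * θop = (θop + 1) * D := by
  conv_lhs => rw [show θop = M X * D from rfl]
  rw [← mul_assoc, hXD]

lemma DL {a b : EndP} (h : D * a = b * D) (c : ℂ) :
    D * (a + c • 1) = (b + c • 1) * D := by
  rw [mul_add, add_mul, h, mul_smul_comm, smul_mul_assoc, mul_one, one_mul]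

lemma passD {f g : EndP} (h : D * f = g * D) (r : EndP) : D * (f * r) = g * (D * r) := by
  rw [← mul_assoc, h, mul_assoc]

lemma passMX (r : EndP) : D * (M X * r) = (θop + 1) * r := by rw [← mul_assoc, hXD]

lemma Dsub1 {a b : EndP} (h : D * a = (b + 1) * D) : D * (a - 1) = b * D := by
  rw [mul_sub, mul_one, h, add_mul, one_mul, add_sub_cancel_right]

lemma Dadd1 {a b : EndP} (h : D * a = b * D) : D * (a + 1) = (b + 1) * D := by
  rw [mul_add, mul_one, h, add_mul, one_mul]

lemma Dθ1 : D * (θop - 1) = θop * D := Dsub1 hDθ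

lemma Dθ2 : D * (θop - 2) = (θop - 1) * D := by
  have e : θop - 2 = θop - 1 - 1 := by rw [sub_sub, one_add_one_eq_two]
  have h' : D * (θop - 1) = ((θop - 1) + 1) * D := by
    rw [show (θop - 1) + 1 = θop from by abel]; exact Dθ1
  rw [e]; exact Dsub1 h'

lemma Dθ3 : D * (θop - 3) = (θop - 2) * D := by
  have e : θop - 3 = θop - 2 - 1 := by
    rw [sub_sub, show (2:EndP) + 1 = 3 from two_add_one_eq_three]
  have h' : D * (θop - 2) = ((θop - 2) + 1) * D := by
    rw [sub_add, show (2:EndP) - 1 = 1 from by rw [← one_add_one_eq_two, add_sub_cancel_right]]; exact Dθ2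
  rw [e]; exact Dsub1 h'

lemma hL1 : D * (θop + 1) = (θop + 2) * D := by
  have := Dadd1 hDθ
  rwa [show (θop + 1) + 1 = θop + 2 from by rw [add_assoc, one_add_one_eq_two]] at this

lemma hL2 : D * (θop + 2) = (θop + 3) * D := by
  have := Dadd1 hL1
  rwa [show (θop + 1) + 1 = θop + 2 from by rw [add_assoc, one_add_one_eq_two],
       show (θop + 2) + 1 = θop + 3 from by rw [add_assoc, two_add_one_eq_three]] at this

lemma Dpow {a b : EndP} (h : D * a = b * D) : ∀ n, D * a ^ n = b ^ n * D
  | 0 => by simp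
  | (n+1) => by rw [pow_succ, ← mul_assoc, Dpow h n, mul_assoc, h, ← mul_assoc, ← pow_succ]

lemma Dcubic {a b : EndP} (h : D * a = b * D) (c3 c2 c1 c0 : ℂ) :
    D * (c3 • a ^ 3 + c2 • a ^ 2 + c1 • a + c0 • 1) =
      (c3 • b ^ 3 + c2 • b ^ 2 + c1 • b + c0 • 1) * D := by
  simp only [mul_add, add_mul, mul_smul_comm, smul_mul_assoc, mul_one, one_mul,
    Dpow h 3, Dpow h 2, h]

lemma Dtriple {a b : EndP} (h : D * a = b * D) (c1 c2 c3 : ℂ) :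
    D * ((a + c1 • 1) * (a + c2 • 1) * (a + c3 • 1)) =
      (b + c1 • 1) * (b + c2 • 1) * (b + c3 • 1) * D := by
  simp only [mul_assoc]
  rw [passD (DL h c1), passD (DL h c2), DL h c3]

lemma Dneg {f g : EndP} (h : D * f = g * D) : D * (-f) = (-g) * D :=
  calc D * (-f) = -(D * f) := mul_neg D f
  _ = -(g * D) := by rw [h]
  _ = (-g) * D := (neg_mul g D).symm

lemma num2 : ((2:ℂ) • (1:EndP)) = 2 :=
  (Algebra.algebraMap_eq_smul_one (2:ℂ)).symm.trans (map_ofNat (algebraMap ℂ EndP) 2)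

lemma num3 : ((3:ℂ) • (1:EndP)) = 3 :=
  (Algebra.algebraMap_eq_smul_one (3:ℂ)).symm.trans (map_ofNat (algebraMap ℂ EndP) 3)

lemma hM3 : M ((X:Polynomial ℂ) ^ 3) = M X * (M X * M X) := by
  rw [show (X:Polynomial ℂ)^3 = X*(X*X) from by ring]
  simp [M, LinearMap.mulLeft_mul, Module.End.mul_eq_comp]

lemma hM2 : M ((X:Polynomial ℂ) ^ 2) = M X * M X := by
  rw [show (X:Polynomial ℂ)^2 = X*X from by ring]
  simp [M, LinearMap.mulLeft_mul, Module.End.mul_eq_comp]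

lemma hD3 : (D:EndP) ^ 3 = D * (D * D) := by rw [pow_succ, sq, mul_assoc]

lemma hD2 : (D:EndP) ^ 2 = D * D := sq D

/-- Factorization of `H₆` when `s = 1` (i.e. `e₁ + ⋯ + e₉ = 3`):
`H₆(e,u) = ∂³ ∘ (x³B₀(θ) + x²B₁(θ−1) + xB₂(θ−2) + T₃(θ−3))`. -/
theorem H6_factorization_s_eq_one (e1 e2 e3 e4 e5 e6 e7 e8 e9 u : ℂ)
    (h : e1 + e2 + e3 + e4 + e5 + e6 + e7 + e8 + e9 = 3) :
    H6op e1 e2 e3 e4 e5 e6 e7 e8 e9 u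
      = D ^ 3 * (M (X ^ 3) * B0op e7 e8 e9 θop
          + M (X ^ 2) * B1op e1 e2 e3 e4 e5 e6 e7 e8 e9 u (θop - 1)
          + M X * B2op e1 e2 e3 e4 e5 e6 e7 e8 e9 u (θop - 2)
          + T3op e1 e2 e3 (θop - 3)) := by
  have hs : sC e1 e2 e3 e4 e5 e6 e7 e8 e9 = 1 := by
    unfold sC
    rw [div_eq_one_iff_eq (by norm_num : (3:ℂ) ≠ 0)]
    linear_combination -h
  have hB1 : D * B1op e1 e2 e3 e4 e5 e6 e7 e8 e9 u (θop - 1)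
      = B1op e1 e2 e3 e4 e5 e6 e7 e8 e9 u θop * D := by
    unfold B1op; exact Dcubic Dθ1 _ _ _ _
  have hB2a : D * B2op e1 e2 e3 e4 e5 e6 e7 e8 e9 u (θop - 2)
      = ((3:ℂ) • (θop - 1) ^ 3 + (T22C e1 e2 e3 e4 e5 e6 e7 e8 e9) • (θop - 1) ^ 2
          + (T21C e1 e2 e3 e4 e5 e6 e7 e8 e9) • (θop - 1)
          + (T20C e1 e2 e3 e4 e5 e6 e7 e8 e9 u) • 1) * D := by
    unfold B2op; exact Dcubic Dθ2 _ _ _ _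
  have hB2b : D * ((3:ℂ) • (θop - 1) ^ 3 + (T22C e1 e2 e3 e4 e5 e6 e7 e8 e9) • (θop - 1) ^ 2
          + (T21C e1 e2 e3 e4 e5 e6 e7 e8 e9) • (θop - 1)
          + (T20C e1 e2 e3 e4 e5 e6 e7 e8 e9 u) • 1)
      = B2op e1 e2 e3 e4 e5 e6 e7 e8 e9 u θop * D := by
    unfold B2op; exact Dcubic Dθ1 _ _ _ _
  have hT3a : D * T3op e1 e2 e3 (θop - 3)
      = (-((θop - 2 + (3 - e1) • 1) * (θop - 2 + (3 - e2) • 1) * (θop - 2 + (3 - e3) • 1))) * D := by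
    unfold T3op; exact Dneg (Dtriple Dθ3 _ _ _)
  have hT3b : D * (-((θop - 2 + (3 - e1) • 1) * (θop - 2 + (3 - e2) • 1) * (θop - 2 + (3 - e3) • 1)))
      = (-((θop - 1 + (3 - e1) • 1) * (θop - 1 + (3 - e2) • 1) * (θop - 1 + (3 - e3) • 1))) * D :=
    Dneg (Dtriple Dθ2 _ _ _)
  have hT3c : D * (-((θop - 1 + (3 - e1) • 1) * (θop - 1 + (3 - e2) • 1) * (θop - 1 + (3 - e3) • 1)))
      = T3op e1 e2 e3 θop * D := by
    unfold T3op; exact Dneg (Dtriple Dθ1 _ _ _)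
  have c12 : (1:ℂ) + 2 = 3 := by norm_num
  have c11 : (1:ℂ) + 1 = 2 := by norm_num
  simp only [H6op, hs, c12, c11, num3, num2, one_smul]
  rw [hM3, hM2, hD3, hD2]
  simp only [mul_add, mul_assoc]
  simp only [passMX, passD hL1, passD hL2, hB1, hB2a, passD hB2b, hT3a, passD hT3b, passD hT3c]
  noncomm_ring
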